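/- arXiv:2406.00431 — 3 statements merged into one kernel-verified Lean document; each statement's English description precedes it below -/
import Mathlib

section
/- Let f : ℝ^d → ℝ be differentiable with M-Lipschitz gradient (M > 0), i.e. ‖∇f(x) − ∇f(y)‖ ≤ M‖x − y‖ for all x, y. Let τ, e ∈ ℝ^d, let η > 0 with M·η ≤ 1, and let 0 ≤ α ≤ 1. Define τ' = τ − η·∇f(τ) + α·η·e. Then f(τ') ≤ f(τ) − η·(1 − Mη/2 − α(1 − Mη)/2)·‖∇f(τ)‖² + (αη/2)·(1 − Mη(1 − α))·‖e‖². -/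
open scoped RealInnerProductSpace

theorem descent_lemma {F : Type*} [NormedAddCommGroup F] [InnerProductSpace ℝ F]
    [CompleteSpace F] (f : F → ℝ) (M : ℝ) (hM : 0 ≤ M)
    (hdiff : Differentiable ℝ f)
    (hlip : ∀ x y, ‖gradient f x - gradient f y‖ ≤ M * ‖x - y‖)
    (x v : F) :
    f (x + v) ≤ f x + ⟪gradient f x, v⟫ + M / 2 * ‖v‖ ^ 2 := by
  set g : ℝ → ℝ := fun t => f (x + t • v) with hg
  have hgrad_cont : Continuous fun p => gradient f p := by
    have : LipschitzWith (Real.toNNReal M) (fun p => gradient f p) := by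
      apply LipschitzWith.of_dist_le_mul
      intro p q
      rw [dist_eq_norm, dist_eq_norm, Real.coe_toNNReal M hM]
      exact hlip p q
    exact this.continuous
  have hderiv : ∀ t : ℝ, HasDerivAt g ⟪gradient f (x + t • v), v⟫ t := by
    intro t
    have h1 : HasDerivAt (fun t : ℝ => x + t • v) v t := by
      simpa using (hasDerivAt_id t).smul_const v |>.const_add x
    have h2 := ((hdiff (x + t • v)).hasGradientAt).hasFDerivAt
    simpa [hg, Function.comp_def] using h2.comp_hasDerivAt t h1
  have hcont : Continuous fun t : ℝ => ⟪gradient f (x + t • v), v⟫ := by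
    exact (hgrad_cont.comp (by continuity)).inner continuous_const
  have hFTC : f (x + v) - f x = ∫ t in (0:ℝ)..1, ⟪gradient f (x + t • v), v⟫ := by
    have := intervalIntegral.integral_eq_sub_of_hasDerivAt (f := g)
      (f' := fun t => ⟪gradient f (x + t • v), v⟫) (a := 0) (b := 1)
      (fun t _ => hderiv t) (hcont.intervalIntegrable 0 1)
    simp only [hg] at this
    simp at this ⊢
    linarith [this]
  have hbound : ∀ t ∈ Set.Icc (0:ℝ) 1,
      ⟪gradient f (x + t • v), v⟫ ≤ ⟪gradient f x, v⟫ + M * t * ‖v‖ ^ 2 := by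
    intro t ht
    have h1 : ⟪gradient f (x + t • v) - gradient f x, v⟫ ≤ M * t * ‖v‖ ^ 2 := by
      calc ⟪gradient f (x + t • v) - gradient f x, v⟫
          ≤ ‖gradient f (x + t • v) - gradient f x‖ * ‖v‖ := real_inner_le_norm _ _
        _ ≤ (M * ‖(x + t • v) - x‖) * ‖v‖ := by
            have := hlip (x + t • v) x
            have h0 : (0:ℝ) ≤ ‖v‖ := norm_nonneg _
            nlinarith [this]
        _ = M * t * ‖v‖ ^ 2 := by
            rw [add_sub_cancel_left, norm_smul, Real.norm_eq_abs, abs_of_nonneg ht.1]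
            ring
    have := inner_sub_left (𝕜 := ℝ) (gradient f (x + t • v)) (gradient f x) v
    linarith [h1, this.symm.le, this.le]
  have hint : (∫ t in (0:ℝ)..1, ⟪gradient f (x + t • v), v⟫)
      ≤ ∫ t in (0:ℝ)..1, (⟪gradient f x, v⟫ + M * t * ‖v‖ ^ 2) := by
    apply intervalIntegral.integral_mono_on zero_le_one
      (hcont.intervalIntegrable 0 1)
      ((by continuity : Continuous fun t : ℝ => ⟪gradient f x, v⟫ + M * t * ‖v‖ ^ 2).intervalIntegrable 0 1)
    exact hbound
  have hval : (∫ t in (0:ℝ)..1, (⟪gradient f x, v⟫ + M * t * ‖v‖ ^ 2))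
      = ⟪gradient f x, v⟫ + M / 2 * ‖v‖ ^ 2 := by
    have hrw : ∀ t : ℝ, ⟪gradient f x, v⟫ + M * t * ‖v‖ ^ 2
        = ⟪gradient f x, v⟫ + (M * ‖v‖ ^ 2) * t := fun t => by ring
    simp only [hrw]
    rw [intervalIntegral.integral_add (intervalIntegrable_const)
      ((by continuity : Continuous fun t : ℝ => M * ‖v‖ ^ 2 * t).intervalIntegrable 0 1),
      intervalIntegral.integral_const_mul, integral_id]
    simp
    ring
  linarith [hFTC, hint, hval]

/-- Per-step descent inequality for SpaFL's regularized threshold update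
`τ' = τ - η∇f(τ) + αη·e` for an `M`-smooth function `f`. -/
theorem spafl_descent_step {d : ℕ} (f : EuclideanSpace ℝ (Fin d) → ℝ)
    (M : ℝ) (hM : 0 < M)
    (hdiff : Differentiable ℝ f)
    (hlip : ∀ x y, ‖gradient f x - gradient f y‖ ≤ M * ‖x - y‖)
    (τ e : EuclideanSpace ℝ (Fin d)) (η : ℝ) (hη : 0 < η) (hMη : M * η ≤ 1)
    (α : ℝ) (hα0 : 0 ≤ α) (hα1 : α ≤ 1) :
    f (τ - η • gradient f τ + (α * η) • e) ≤
      f τ - η * (1 - M * η / 2 - α * (1 - M * η) / 2) * ‖gradient f τ‖ ^ 2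
        + (α * η / 2) * (1 - M * η * (1 - α)) * ‖e‖ ^ 2 := by
  set g := gradient f τ with hgdef
  set v := -(η • g) + (α * η) • e with hv
  have harg : τ - η • g + (α * η) • e = τ + v := by
    rw [hv]; abel
  have hdesc := descent_lemma f M hM.le hdiff hlip τ v
  rw [harg]
  have hinner : ⟪g, v⟫ = -(η * ‖g‖ ^ 2) + (α * η) * ⟪g, e⟫ := by
    rw [hv, inner_add_right, inner_neg_right, real_inner_smul_right,
      real_inner_smul_right, real_inner_self_eq_norm_sq]
  have hnorm : ‖v‖ ^ 2 = η ^ 2 * ‖g‖ ^ 2 - 2 * (η * (α * η)) * ⟪g, e⟫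
      + (α * η) ^ 2 * ‖e‖ ^ 2 := by
    rw [hv, ← sub_eq_neg_add, norm_sub_sq_real, norm_smul, norm_smul,
      real_inner_smul_left, real_inner_smul_right]
    simp only [Real.norm_eq_abs, abs_of_nonneg hη.le,
      abs_of_nonneg (by positivity : (0:ℝ) ≤ α * η), real_inner_self_eq_norm_sq]
    rw [real_inner_comm e g]
    ring
  have hkey : 2 * ⟪g, e⟫ ≤ ‖g‖ ^ 2 + ‖e‖ ^ 2 := by
    have := norm_sub_sq_real g e
    nlinarith [sq_nonneg ‖g - e‖]
  have hfac : 0 ≤ α * η * (1 - M * η) := by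
    have : 0 ≤ 1 - M * η := by linarith
    positivity
  nlinarith [hdesc, hinner, hnorm, mul_nonneg hfac (by linarith : (0:ℝ) ≤ ‖g‖ ^ 2 + ‖e‖ ^ 2 - 2 * ⟪g, e⟫)]
end

section
/- Let d ≥ 1, σ > 0, δ ∈ (0, 1), and B ≥ 0. Let v ∈ ℝ^d with ‖v‖ ≤ B. Let μ be the product measure on ℝ^d whose coordinates are i.i.d. Gaussian with mean 0 and variance σ², and let μ' = μ.map(fun x => x + v) be its translate by v. Then for every measurable set A ⊆ ℝ^d: μ(A) ≤ exp( (2√2·σ·B·√(log(1/δ)) + B²) / (2σ²) ) · μ'(A) + δ. -/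
open MeasureTheory ProbabilityTheory

open Real Finset
open scoped ENNReal NNReal

/-- Tonelli for a finite product of functions against a product measure. -/
theorem lintegral_pi_prod_aux {n : ℕ} {E : Fin n → Type*} [∀ i, MeasurableSpace (E i)]
    (μ : ∀ i, Measure (E i)) [∀ i, SigmaFinite (μ i)]
    (f : ∀ i, E i → ℝ≥0∞) (hf : ∀ i, Measurable (f i)) :
    ∫⁻ x : ∀ i, E i, ∏ i, f i (x i) ∂Measure.pi μ = ∏ i, ∫⁻ x, f i x ∂μ i := by
  induction n with
  | zero => simp [Measure.pi_of_empty]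
  | succ n ih =>
    have hmp := measurePreserving_piFinSuccAbove μ 0
    have hprodmeas : Measurable fun z : ∀ j : Fin n, E ((0 : Fin (n+1)).succAbove j) =>
        ∏ j, f ((0 : Fin (n+1)).succAbove j) (z j) :=
      Finset.measurable_prod _ fun j _ => (hf _).comp (measurable_pi_apply j)
    have hF : Measurable fun p : E 0 × (∀ j : Fin n, E ((0 : Fin (n+1)).succAbove j)) =>
        f 0 p.1 * ∏ j, f ((0 : Fin (n+1)).succAbove j) (p.2 j) :=
      ((hf 0).comp measurable_fst).mul (hprodmeas.comp measurable_snd)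
    calc ∫⁻ x, ∏ i, f i (x i) ∂Measure.pi μ
        = ∫⁻ p, f 0 p.1 * ∏ j, f ((0 : Fin (n+1)).succAbove j) (p.2 j)
            ∂((μ 0).prod (Measure.pi fun j => μ ((0 : Fin (n+1)).succAbove j))) := by
          rw [← hmp.lintegral_comp hF]
          congr 1
          ext x
          simp [MeasurableEquiv.piFinSuccAbove, Fin.tail,
            Fin.prod_univ_succAbove (fun i => f i (x i)) 0]
          rfl
      _ = (∫⁻ y, f 0 y ∂μ 0) *
            ∫⁻ z, ∏ j, f ((0 : Fin (n+1)).succAbove j) (z j)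
              ∂(Measure.pi fun j => μ ((0 : Fin (n+1)).succAbove j)) :=
          lintegral_prod_mul (hf 0).aemeasurable hprodmeas.aemeasurable
      _ = ∏ i, ∫⁻ x, f i x ∂μ i := by
          rw [ih _ _ (fun j => hf _), ← Fin.prod_univ_succAbove (fun i => ∫⁻ x, f i x ∂μ i) 0]

/-- Specialization to `EuclideanSpace`. -/
theorem lintegral_pi_prod_euc {d : ℕ} (γ : Fin d → Measure ℝ) [∀ i, SigmaFinite (γ i)]
    (f : Fin d → ℝ → ℝ≥0∞) (hf : ∀ i, Measurable (f i)) :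
    ∫⁻ x : EuclideanSpace ℝ (Fin d), ∏ i, f i (x i)
        ∂((Measure.pi γ).map (MeasurableEquiv.toLp 2 (Fin d → ℝ)))
      = ∏ i, ∫⁻ y, f i y ∂γ i := by
  rw [lintegral_map_equiv]
  exact lintegral_pi_prod_aux γ f hf

instance gaussianReal_mk_isProbabilityMeasure (m a : ℝ) (h : 0 ≤ a) :
    IsProbabilityMeasure (gaussianReal m ⟨a, h⟩) :=
  (inferInstance : ∀ v : ℝ≥0, IsProbabilityMeasure (gaussianReal m v)) ⟨a, h⟩

section GaussCoord

variable {σ : ℝ} (hσ : 0 < σ)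

lemma hVne (hσ : 0 < σ) : (⟨σ^2, sq_nonneg σ⟩ : ℝ≥0) ≠ 0 := by
  intro h
  have h2 : σ^2 = 0 := congrArg NNReal.toReal h
  exact (pow_pos hσ 2).ne' h2

lemma pdfReal_shift (hσ : 0 < σ) (c y : ℝ) :
    gaussianPDFReal 0 ⟨σ^2, sq_nonneg σ⟩ y * Real.exp ((2*y*c - c^2)/(2*σ^2))
      = gaussianPDFReal c ⟨σ^2, sq_nonneg σ⟩ y := by
  simp only [gaussianPDFReal]
  set V : ℝ≥0 := ⟨σ^2, sq_nonneg σ⟩ with hV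
  have hVc : (V : ℝ) = σ^2 := rfl
  rw [hVc]
  rw [mul_assoc, ← Real.exp_add]
  congr 1
  have h := hσ.ne'
  field_simp
  ring

lemma pdfReal_mgf (hσ : 0 < σ) (c y : ℝ) :
    Real.exp (c*y) * gaussianPDFReal 0 ⟨σ^2, sq_nonneg σ⟩ y
      = Real.exp (c^2*σ^2/2) * gaussianPDFReal (c*σ^2) ⟨σ^2, sq_nonneg σ⟩ y := by
  simp only [gaussianPDFReal]
  set V : ℝ≥0 := ⟨σ^2, sq_nonneg σ⟩ with hV
  have hVc : (V : ℝ) = σ^2 := rfl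
  rw [hVc]
  rw [mul_left_comm, mul_left_comm (Real.exp (c^2*σ^2/2)), ← Real.exp_add, ← Real.exp_add]
  congr 2
  have h := hσ.ne'
  field_simp
  ring

lemma gaussian_withDensity_shift (hσ : 0 < σ) (c : ℝ) :
    (gaussianReal 0 ⟨σ^2, sq_nonneg σ⟩).withDensity
        (fun y => ENNReal.ofReal (Real.exp ((2*y*c - c^2)/(2*σ^2))))
      = gaussianReal c ⟨σ^2, sq_nonneg σ⟩ := by
  have hmeas : Measurable fun y => ENNReal.ofReal (Real.exp ((2*y*c - c^2)/(2*σ^2))) := by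
    exact (((measurable_id.const_mul 2).mul_const c).sub_const _).div_const _
      |>.exp.ennreal_ofReal
  rw [gaussianReal_of_var_ne_zero _ (hVne hσ), gaussianReal_of_var_ne_zero _ (hVne hσ),
      ← withDensity_mul _ (measurable_gaussianPDF 0 ⟨σ^2, sq_nonneg σ⟩) hmeas]
  congr 1
  ext y
  simp only [Pi.mul_apply, gaussianPDF]
  rw [← ENNReal.ofReal_mul (gaussianPDFReal_nonneg 0 ⟨σ^2, sq_nonneg σ⟩ y), pdfReal_shift hσ]

lemma lintegral_exp_gaussian (hσ : 0 < σ) (c : ℝ) :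
    ∫⁻ y, ENNReal.ofReal (Real.exp (c*y)) ∂(gaussianReal 0 ⟨σ^2, sq_nonneg σ⟩)
      = ENNReal.ofReal (Real.exp (c^2*σ^2/2)) := by
  have hmeas : Measurable fun y : ℝ => ENNReal.ofReal (Real.exp (c*y)) :=
    (measurable_id.const_mul c).exp.ennreal_ofReal
  rw [gaussianReal_of_var_ne_zero _ (hVne hσ),
      lintegral_withDensity_eq_lintegral_mul _ (measurable_gaussianPDF 0 ⟨σ^2, sq_nonneg σ⟩) hmeas]
  have : ∀ y, (gaussianPDF 0 ⟨σ^2, sq_nonneg σ⟩ * fun y => ENNReal.ofReal (Real.exp (c*y))) y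
      = ENNReal.ofReal (Real.exp (c^2*σ^2/2)) * gaussianPDF (c*σ^2) ⟨σ^2, sq_nonneg σ⟩ y := by
    intro y
    simp only [Pi.mul_apply, gaussianPDF]
    rw [← ENNReal.ofReal_mul (gaussianPDFReal_nonneg 0 ⟨σ^2, sq_nonneg σ⟩ y), ← ENNReal.ofReal_mul (Real.exp_nonneg _),
        mul_comm (gaussianPDFReal 0 ⟨σ^2, sq_nonneg σ⟩ y), pdfReal_mgf hσ]
  simp_rw [this]
  rw [lintegral_const_mul _ (measurable_gaussianPDF (c*σ^2) ⟨σ^2, sq_nonneg σ⟩),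
      lintegral_gaussianPDF_eq_one _ (hVne hσ), mul_one]

end GaussCoord


lemma indicator_prod_eq {d : ℕ} (σ : ℝ) (v : EuclideanSpace ℝ (Fin d))
    (s : Fin d → Set ℝ) (x : EuclideanSpace ℝ (Fin d)) :
    (WithLp.ofLp ⁻¹' Set.pi Set.univ s).indicator
      (fun x : EuclideanSpace ℝ (Fin d) =>
        ENNReal.ofReal (Real.exp ((2 * (∑ i, x i * v i) - (∑ i, (v i)^2))/(2*σ^2)))) x
      = ∏ i, (s i).indicator
          (fun y => ENNReal.ofReal (Real.exp ((2*y*(v i) - (v i)^2)/(2*σ^2)))) (x i) := by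
  by_cases hx : x ∈ WithLp.ofLp ⁻¹' Set.pi Set.univ s
  · rw [Set.indicator_of_mem hx,
      Finset.prod_congr rfl (fun i _ => Set.indicator_of_mem (hx i (Set.mem_univ i)) _),
      ← ENNReal.ofReal_prod_of_nonneg (fun i _ => Real.exp_nonneg _), ← Real.exp_sum]
    congr 2
    rw [Finset.sum_congr rfl
        (fun i (_ : i ∈ Finset.univ) => (by ring :
          (2 * (x i) * v i - (v i)^2)/(2*σ^2) = (2 * ((x i) * v i) - (v i)^2)/(2*σ^2))),
      ← Finset.sum_div, Finset.sum_sub_distrib, ← Finset.mul_sum]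
  · rw [Set.indicator_of_notMem hx]
    obtain ⟨i, hi⟩ : ∃ i, x i ∉ s i := by
      by_contra h
      push_neg at h
      exact hx fun i _ => h i
    exact (Finset.prod_eq_zero (Finset.mem_univ i) (Set.indicator_of_notMem hi _)).symm


/-- Per-round `(ε, δ)`-differential-privacy guarantee of the Gaussian mechanism:
if `μ' ` is the translate by `v` (with `‖v‖ ≤ B`) of the isotropic Gaussian `μ` on
`ℝ^d`, then `μ(A) ≤ exp((2√2·σ·B·√(log(1/δ)) + B²)/(2σ²))·μ'(A) + δ` for all
measurable `A`. -/
theorem gaussian_mechanism_dp (d : ℕ) (hd : 1 ≤ d) (σ δ B : ℝ)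
    (hσ : 0 < σ) (hδ0 : 0 < δ) (hδ1 : δ < 1) (hB : 0 ≤ B)
    (v : EuclideanSpace ℝ (Fin d)) (hv : ‖v‖ ≤ B)
    (μ μ' : Measure (EuclideanSpace ℝ (Fin d)))
    (hμ : μ = (Measure.pi fun _ : Fin d => gaussianReal 0 ⟨σ ^ 2, sq_nonneg σ⟩).map
      (MeasurableEquiv.toLp 2 (Fin d → ℝ)))
    (hμ' : μ' = μ.map (fun x => x + v)) :
    ∀ A : Set (EuclideanSpace ℝ (Fin d)), MeasurableSet A →
      μ A ≤ ENNReal.ofReal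
          (Real.exp ((2 * Real.sqrt 2 * σ * B * Real.sqrt (Real.log (1 / δ)) + B ^ 2)
            / (2 * σ ^ 2))) * μ' A
        + ENNReal.ofReal δ := by
  intro A hA
  have hσ2 : (0:ℝ) < σ ^ 2 := by positivity
  set V : ℝ≥0 := ⟨σ ^ 2, sq_nonneg σ⟩ with hVdef
  have hL0 : 0 < Real.log (1/δ) := Real.log_pos (one_lt_one_div hδ0 hδ1)
  set L := Real.log (1/δ) with hLdef
  set t : ℝ := Real.sqrt 2 * σ * B * Real.sqrt L with htdef
  have ht0 : 0 ≤ t := by positivity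
  set ε : ℝ := (2 * Real.sqrt 2 * σ * B * Real.sqrt L + B ^ 2) / (2 * σ ^ 2) with hεdef
  have h2t : 2 * Real.sqrt 2 * σ * B * Real.sqrt L = 2 * t := by rw [htdef]; ring
  have htsq : t^2 = 2*σ^2*B^2*L := by
    rw [htdef, mul_pow, mul_pow, mul_pow, Real.sq_sqrt (by norm_num : (0:ℝ) ≤ 2),
      Real.sq_sqrt hL0.le]
  have hW0 : (0:ℝ) ≤ ∑ i, (v i)^2 := Finset.sum_nonneg fun i _ => sq_nonneg _
  have hnv : ‖v‖^2 = ∑ i, (v i)^2 := by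
    rw [EuclideanSpace.norm_eq, Real.sq_sqrt (Finset.sum_nonneg fun i _ => sq_nonneg _)]
    simp [Real.norm_eq_abs, sq_abs]
  have hWB : ∑ i, (v i)^2 ≤ B^2 := by
    calc ∑ i, (v i)^2 = ‖v‖^2 := hnv.symm
      _ ≤ B^2 := pow_le_pow_left₀ (norm_nonneg _) hv 2
  have hSmeas : Measurable fun x : EuclideanSpace ℝ (Fin d) => ∑ i, x i * v i :=
    Finset.measurable_sum _ fun i _ =>
      ((measurable_pi_apply i).comp (WithLp.measurable_ofLp 2 _)).mul_const _
  have hGmeas : Measurable fun x : EuclideanSpace ℝ (Fin d) =>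
      ENNReal.ofReal (Real.exp ((2 * (∑ i, x i * v i) - ∑ i, (v i)^2)/(2*σ^2))) :=
    (((hSmeas.const_mul 2).sub_const _).div_const _).exp.ennreal_ofReal
  have hgimeas : ∀ c : ℝ, Measurable fun y : ℝ =>
      ENNReal.ofReal (Real.exp ((2*y*c - c^2)/(2*σ^2))) := fun c =>
    ((((measurable_id.const_mul 2).mul_const c).sub_const _).div_const _).exp.ennreal_ofReal
  clear_value V L t ε
  -- Step 1: μ' is the product of shifted Gaussians
  have h1 : μ' = (Measure.pi (fun i => gaussianReal (v i) V)).map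
      (MeasurableEquiv.toLp 2 (Fin d → ℝ)) := by
    rw [hμ', hμ, hVdef]
    have hmp := measurePreserving_pi (fun _ : Fin d => gaussianReal 0 ⟨σ ^ 2, sq_nonneg σ⟩)
        (fun i => gaussianReal (v i) ⟨σ ^ 2, sq_nonneg σ⟩)
        (fun i => ⟨measurable_add_const (v i), by
          rw [show (fun y : ℝ => y + v i) = (· + v i) from rfl,
            gaussianReal_map_add_const (μ := 0) (v := ⟨σ ^ 2, sq_nonneg σ⟩) (v i), zero_add]⟩)
    rw [Measure.map_map (measurable_add_const v) (MeasurableEquiv.measurable _), ← hmp.map_eq,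
      Measure.map_map (MeasurableEquiv.measurable _) hmp.measurable]
    rfl
  -- Step 2: μ' has density G with respect to μ
  have hG : μ.withDensity (fun x : EuclideanSpace ℝ (Fin d) =>
      ENNReal.ofReal (Real.exp ((2 * (∑ i, x i * v i) - ∑ i, (v i)^2)/(2*σ^2)))) = μ' := by
    rw [h1]
    refine (MeasurableEquiv.map_apply_eq_iff_map_symm_apply_eq
      (MeasurableEquiv.toLp 2 (Fin d → ℝ)).symm).mp ?_
    refine (Measure.pi_eq (μ := fun i => gaussianReal (v i) V) fun s hs => ?_).symm
    have hbox : MeasurableSet (WithLp.ofLp ⁻¹' Set.pi Set.univ s : Set (EuclideanSpace ℝ (Fin d))) :=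
      (MeasurableSet.univ_pi hs).preimage (WithLp.measurable_ofLp 2 _)
    rw [Measure.map_apply (MeasurableEquiv.measurable _) (MeasurableSet.univ_pi hs)]
    calc (μ.withDensity (fun x : EuclideanSpace ℝ (Fin d) =>
            ENNReal.ofReal (Real.exp ((2 * (∑ i, x i * v i) - ∑ i, (v i)^2)/(2*σ^2)))))
          (WithLp.ofLp ⁻¹' Set.pi Set.univ s)
        = ∫⁻ a in WithLp.ofLp ⁻¹' Set.pi Set.univ s,
            (fun x : EuclideanSpace ℝ (Fin d) =>
              ENNReal.ofReal (Real.exp ((2 * (∑ i, x i * v i) - ∑ i, (v i)^2)/(2*σ^2)))) a ∂μ :=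
          withDensity_apply _ hbox
      _ = ∫⁻ a, (WithLp.ofLp ⁻¹' Set.pi Set.univ s).indicator
            (fun x : EuclideanSpace ℝ (Fin d) =>
              ENNReal.ofReal (Real.exp ((2 * (∑ i, x i * v i) - ∑ i, (v i)^2)/(2*σ^2)))) a ∂μ :=
          (lintegral_indicator hbox _).symm
      _ = ∫⁻ a : EuclideanSpace ℝ (Fin d), ∏ i, (s i).indicator
            (fun y => ENNReal.ofReal (Real.exp ((2*y*(v i) - (v i)^2)/(2*σ^2)))) (a i) ∂μ := by
          simp_rw [indicator_prod_eq σ v s]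
      _ = ∏ i, ∫⁻ y, (s i).indicator
            (fun y => ENNReal.ofReal (Real.exp ((2*y*(v i) - (v i)^2)/(2*σ^2)))) y
            ∂(gaussianReal 0 (⟨σ ^ 2, sq_nonneg σ⟩ : NNReal)) := by
          rw [hμ, hVdef]
          exact lintegral_pi_prod_euc _ _ (fun i => (hgimeas (v i)).indicator (hs i))
      _ = ∏ i, gaussianReal (v i) V (s i) := by
          rw [hVdef]
          refine Finset.prod_congr rfl fun i _ => ?_
          rw [lintegral_indicator (hs i), ← withDensity_apply _ (hs i),
            gaussian_withDensity_shift hσ (v i)]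
  -- the good event
  set E : Set (EuclideanSpace ℝ (Fin d)) := {x | -t ≤ ∑ i, x i * v i} with hEdef
  have hE : MeasurableSet E := measurableSet_le measurable_const hSmeas
  clear_value E
  -- main bound on the good event
  have hmain : μ (A ∩ E) ≤ ENNReal.ofReal (Real.exp ε) * μ' (A ∩ E) := by
    have hlow : ENNReal.ofReal (Real.exp (-ε)) * μ (A ∩ E) ≤ μ' (A ∩ E) := by
      rw [← hG, withDensity_apply _ (hA.inter hE), ← setLIntegral_const (A ∩ E) _]
      refine setLIntegral_mono hGmeas fun x hx => ?_
      refine ENNReal.ofReal_le_ofReal (Real.exp_le_exp.mpr ?_)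
      have hxE : -t ≤ ∑ i, x i * v i := by
        have := hx.2
        rw [hEdef] at this
        exact this
      rw [hεdef, ← neg_div]
      refine (div_le_div_iff_of_pos_right (by positivity)).mpr ?_
      rw [h2t] at hεdef ⊢
      linarith
    calc μ (A ∩ E)
        = (ENNReal.ofReal (Real.exp ε) * ENNReal.ofReal (Real.exp (-ε))) * μ (A ∩ E) := by
          rw [← ENNReal.ofReal_mul (Real.exp_nonneg _), ← Real.exp_add, add_neg_cancel,
            Real.exp_zero, ENNReal.ofReal_one, one_mul]
      _ = ENNReal.ofReal (Real.exp ε) * (ENNReal.ofReal (Real.exp (-ε)) * μ (A ∩ E)) := by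
          rw [mul_assoc]
      _ ≤ ENNReal.ofReal (Real.exp ε) * μ' (A ∩ E) := mul_le_mul_right hlow _
  -- tail bound
  have htail : μ Eᶜ ≤ ENNReal.ofReal δ := by
    by_cases hv0 : v = 0
    · have hEc : Eᶜ = ∅ := by
        ext x
        have h0 : ∀ i, (0 : EuclideanSpace ℝ (Fin d)) i = 0 := fun i => rfl
        simp [hEdef, hv0, h0, neg_nonpos.mpr ht0]
      rw [hEc]
      simp
    · have hWpos : (0:ℝ) < ∑ i, (v i)^2 := by
        have hn0 : 0 < ‖v‖ := norm_pos_iff.mpr hv0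
        calc (0:ℝ) < ‖v‖^2 := by positivity
          _ = _ := hnv
      set W : ℝ := ∑ i, (v i)^2 with hWdef
      clear_value W
      set c : ℝ := t / (σ^2 * W) with hcdef
      have hc0 : 0 ≤ c := div_nonneg ht0 (mul_nonneg (sq_nonneg σ) hWpos.le)
      clear_value c
      have hexpmeas : Measurable fun x : EuclideanSpace ℝ (Fin d) =>
          ENNReal.ofReal (Real.exp (c * (-(∑ i, x i * v i) - t))) :=
        (((hSmeas.neg.sub_const t).const_mul c).exp).ennreal_ofReal
      have hprodmeas : Measurable fun x : EuclideanSpace ℝ (Fin d) =>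
          ∏ i, ENNReal.ofReal (Real.exp (-(c * v i) * x i)) :=
        Finset.measurable_prod _ fun i _ =>
          ((((measurable_pi_apply i).comp (WithLp.measurable_ofLp 2 _)).const_mul _).exp).ennreal_ofReal
      calc μ Eᶜ = ∫⁻ x in Eᶜ, 1 ∂μ := (setLIntegral_one _).symm
        _ ≤ ∫⁻ x in Eᶜ, ENNReal.ofReal (Real.exp (c * (-(∑ i, x i * v i) - t))) ∂μ := by
            refine setLIntegral_mono hexpmeas fun x hx => ?_
            have hxc : ∑ i, x i * v i < -t := by
              have := hx
              rw [Set.mem_compl_iff, hEdef] at this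
              simpa using this
            rw [← ENNReal.ofReal_one]
            exact ENNReal.ofReal_le_ofReal (Real.one_le_exp (by nlinarith))
        _ ≤ ∫⁻ x, ENNReal.ofReal (Real.exp (c * (-(∑ i, x i * v i) - t))) ∂μ :=
            setLIntegral_le_lintegral _ _
        _ = ENNReal.ofReal (Real.exp (-(c*t))) *
              ∏ i, ENNReal.ofReal (Real.exp ((-(c * v i))^2 * σ^2 / 2)) := by
            have hpt : ∀ x : EuclideanSpace ℝ (Fin d),
                ENNReal.ofReal (Real.exp (c * (-(∑ i, x i * v i) - t)))
                = ENNReal.ofReal (Real.exp (-(c*t))) *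
                    ∏ i, ENNReal.ofReal (Real.exp (-(c * v i) * x i)) := by
              intro x
              rw [← ENNReal.ofReal_prod_of_nonneg (fun i _ => Real.exp_nonneg _), ← Real.exp_sum,
                  ← ENNReal.ofReal_mul (Real.exp_nonneg _), ← Real.exp_add]
              congr 1
              have hsum : ∑ i, -(c * v i) * x i = -(c * ∑ i, x i * v i) := by
                rw [Finset.mul_sum, ← Finset.sum_neg_distrib]
                exact Finset.sum_congr rfl fun i _ => by ring
              rw [hsum]
              ring
            simp_rw [hpt]
            rw [lintegral_const_mul _ hprodmeas, hμ, hVdef,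
              lintegral_pi_prod_euc _
                (fun i y => ENNReal.ofReal (Real.exp (-(c * v i) * y)))
                (fun i => by
                  have h : Measurable fun y : ℝ => -(c * v i) * y := measurable_id.const_mul _
                  exact h.exp.ennreal_ofReal)]
            congr 1
            exact Finset.prod_congr rfl fun i _ => lintegral_exp_gaussian hσ _
        _ ≤ ENNReal.ofReal δ := by
            rw [← ENNReal.ofReal_prod_of_nonneg (fun i _ => Real.exp_nonneg _), ← Real.exp_sum,
                ← ENNReal.ofReal_mul (Real.exp_nonneg _), ← Real.exp_add]
            refine ENNReal.ofReal_le_ofReal ?_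
            rw [← Real.exp_log hδ0]
            refine Real.exp_le_exp.mpr ?_
            have hsum2 : ∑ i, (-(c * v i))^2 * σ^2 / 2 = (c^2*σ^2/2) * W := by
              rw [hWdef, Finset.mul_sum]
              exact Finset.sum_congr rfl fun i _ => by ring
            rw [hsum2]
            have hlogδ : Real.log δ = -L := by rw [hLdef, one_div, Real.log_inv, neg_neg]
            rw [hlogδ, hcdef]
            have hW' : W ≠ 0 := hWpos.ne'
            have hσ' : σ ≠ 0 := hσ.ne'
            have key : -(t/(σ^2*W)*t) + ((t/(σ^2*W))^2*σ^2/2)*W = -(t^2/(2*σ^2*W)) := by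
              field_simp
              ring
            rw [key, neg_le_neg_iff]
            have hval : t^2/(2*σ^2*W) = (B^2/W)*L := by
              rw [htsq]
              field_simp
            rw [hval]
            have h1W : 1 ≤ B^2/W := (one_le_div hWpos).mpr hWB
            nlinarith
  -- assemble
  calc μ A ≤ μ ((A ∩ E) ∪ Eᶜ) := measure_mono (fun x hx => by
        by_cases h : x ∈ E
        exacts [Or.inl ⟨hx, h⟩, Or.inr h])
    _ ≤ μ (A ∩ E) + μ Eᶜ := measure_union_le _ _
    _ ≤ ENNReal.ofReal (Real.exp ε) * μ' (A ∩ E) + ENNReal.ofReal δ := add_le_add hmain htail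
    _ ≤ ENNReal.ofReal (Real.exp ε) * μ' A + ENNReal.ofReal δ :=
        add_le_add_left (mul_le_mul_right (measure_mono Set.inter_subset_left) _) _
end

section
/- Let μ and ν be measures on a measurable space α, let q ∈ [0, 1], ε ≥ 0, and δ ≥ 0. Suppose that for every measurable set A, ν(A) ≤ exp(ε)·μ(A) + δ. Then the mixture ρ = (1 − q)·μ + q·ν satisfies, for every measurable set A: ρ(A) ≤ (1 − q + q·exp(ε))·μ(A) + q·δ; that is, ρ(A) ≤ exp(ε')·μ(A) + q·δ with ε' = log(1 − q + q·exp(ε)). -/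
open MeasureTheory

/-- Privacy amplification by subsampling: if `ν(A) ≤ exp(ε)·μ(A) + δ` for all
measurable `A`, then the mixture `ρ = (1-q)·μ + q·ν` satisfies
`ρ(A) ≤ (1 - q + q·exp(ε))·μ(A) + q·δ`, i.e. `ρ(A) ≤ exp(ε')·μ(A) + q·δ` with
`ε' = log(1 - q + q·exp(ε))`. -/
theorem subsampling_privacy_amplification {α : Type*} [MeasurableSpace α]
    (μ ν : Measure α) (q ε δ : ℝ)
    (hq0 : 0 ≤ q) (hq1 : q ≤ 1) (hε : 0 ≤ ε) (hδ : 0 ≤ δ)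
    (h : ∀ A : Set α, MeasurableSet A →
      ν A ≤ ENNReal.ofReal (Real.exp ε) * μ A + ENNReal.ofReal δ)
    (ρ : Measure α)
    (hρ : ρ = ENNReal.ofReal (1 - q) • μ + ENNReal.ofReal q • ν) :
    ∀ A : Set α, MeasurableSet A →
      ρ A ≤ ENNReal.ofReal (1 - q + q * Real.exp ε) * μ A + ENNReal.ofReal (q * δ) ∧
      ρ A ≤ ENNReal.ofReal (Real.exp (Real.log (1 - q + q * Real.exp ε))) * μ A
          + ENNReal.ofReal (q * δ) := by
  intro A hA
  have hx : (1:ℝ) ≤ 1 - q + q * Real.exp ε := by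
    nlinarith [Real.one_le_exp hε]
  have hxpos : (0:ℝ) < 1 - q + q * Real.exp ε := lt_of_lt_of_le one_pos hx
  have key : ρ A ≤ ENNReal.ofReal (1 - q + q * Real.exp ε) * μ A
      + ENNReal.ofReal (q * δ) := by
    rw [hρ]
    simp only [Measure.coe_add, Measure.coe_smul, Pi.add_apply, Pi.smul_apply,
      smul_eq_mul]
    calc ENNReal.ofReal (1 - q) * μ A + ENNReal.ofReal q * ν A
        ≤ ENNReal.ofReal (1 - q) * μ A
          + ENNReal.ofReal q * (ENNReal.ofReal (Real.exp ε) * μ A + ENNReal.ofReal δ) := by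
          gcongr
          exact h A hA
      _ = (ENNReal.ofReal (1 - q) + ENNReal.ofReal (q * Real.exp ε)) * μ A
          + ENNReal.ofReal (q * δ) := by
          rw [mul_add, ← mul_assoc, ← ENNReal.ofReal_mul hq0, ← ENNReal.ofReal_mul hq0]
          ring
      _ = ENNReal.ofReal (1 - q + q * Real.exp ε) * μ A + ENNReal.ofReal (q * δ) := by
          rw [← ENNReal.ofReal_add (by linarith) (by positivity)]
  refine ⟨key, ?_⟩
  rwa [Real.exp_log hxpos]
end
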